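/- arXiv:2603.17151 — 2 statements merged into one kernel-verified Lean document; each statement's English description precedes it below -/
import Mathlib

section
/- (Proposition 1, CDF correction.) Let ω : ℝ → (0, ∞) be differentiable and define P(κ) = exp κ · Φ(z₊(κ)) − Φ(z₋(κ)) with z_±(κ) = (κ ± ω(κ)²/2)/ω(κ). Then P is differentiable on ℝ and exp(−κ) P'(κ) = Φ(z₊(κ)) + φ(z₊(κ)) · ω'(κ); i.e., the implied cumulative distribution function equals the Black–Scholes quasi-CDF Ψ_BS^ω(κ) = Φ(z₊(κ)) plus the correction addend ζ^ω(κ) = ψ_BS^ω(κ) ω(κ) ∂_κ ω(κ) = φ(z₊(κ)) ω'(κ). -/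
open MeasureTheory Real

/-- Standard normal probability density function. -/
noncomputable def stdNormalPDF (z : ℝ) : ℝ := Real.exp (-z ^ 2 / 2) / Real.sqrt (2 * Real.pi)

/-- Standard normal cumulative distribution function. -/
noncomputable def stdNormalCDF (z : ℝ) : ℝ := ∫ u in Set.Iic z, stdNormalPDF u

/-!
Since `z₋ = z₊ - ω` and `z₊ ω - ω² / 2 = κ`, the Gaussian density satisfies
`φ(z₋) = exp κ · φ(z₊)`. Differentiating `P = exp κ · Φ(z₊) - Φ(z₊ - ω)` by the chain rule, the
terms carrying `z₊'` cancel, and only `exp κ · Φ(z₊)` and `exp κ · φ(z₊) · ω'` survive.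
-/

theorem hasDerivAt_integral_Iic {f : ℝ → ℝ} (hf : Integrable f) (hc : Continuous f) (z : ℝ) :
    HasDerivAt (fun x => ∫ u in Set.Iic x, f u) (f z) z := by
  have split : (fun x => ∫ u in Set.Iic x, f u) =
      fun x => (∫ u in Set.Iic 0, f u) + ∫ u in (0 : ℝ)..x, f u := by
    funext x
    rw [← intervalIntegral.integral_Iic_sub_Iic hf.integrableOn hf.integrableOn]
    ring
  rw [split]
  exact (intervalIntegral.integral_hasDerivAt_right hf.intervalIntegrable
    (hc.stronglyMeasurableAtFilter _ _) hc.continuousAt).const_add _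

theorem continuous_stdNormalPDF : Continuous stdNormalPDF := by
  unfold stdNormalPDF
  fun_prop

theorem integrable_stdNormalPDF : Integrable stdNormalPDF := by
  refine ((integrable_exp_neg_mul_sq (b := 1 / 2) (by norm_num)).div_const
    (Real.sqrt (2 * Real.pi))).congr (Filter.Eventually.of_forall fun x => ?_)
  simp only [stdNormalPDF]
  ring_nf

theorem hasDerivAt_stdNormalCDF (z : ℝ) : HasDerivAt stdNormalCDF (stdNormalPDF z) z :=
  hasDerivAt_integral_Iic integrable_stdNormalPDF continuous_stdNormalPDF z

theorem stdNormalPDF_sub (z w : ℝ) :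
    stdNormalPDF (z - w) = Real.exp (z * w - w ^ 2 / 2) * stdNormalPDF z := by
  simp only [stdNormalPDF]
  rw [mul_div_assoc', ← Real.exp_add]
  congr 2
  ring

theorem hasDerivAt_exp_mul_stdNormalCDF_sub {z w : ℝ → ℝ} {z' w' κ : ℝ}
    (hz : HasDerivAt z z' κ) (hw : HasDerivAt w w' κ) (hpivot : z κ * w κ - w κ ^ 2 / 2 = κ) :
    HasDerivAt (fun x => Real.exp x * stdNormalCDF (z x) - stdNormalCDF (z x - w x))
      (Real.exp κ * (stdNormalCDF (z κ) + stdNormalPDF (z κ) * w')) κ := by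
  have h : HasDerivAt (fun x => Real.exp x * stdNormalCDF (z x) - stdNormalCDF (z x - w x))
      (Real.exp κ * stdNormalCDF (z κ) + Real.exp κ * (stdNormalPDF (z κ) * z')
        - stdNormalPDF (z κ - w κ) * (z' - w')) κ :=
    ((Real.hasDerivAt_exp κ).fun_mul ((hasDerivAt_stdNormalCDF (z κ)).comp κ hz)).fun_sub
      ((hasDerivAt_stdNormalCDF (z κ - w κ)).comp (h₂ := stdNormalCDF) κ (hz.fun_sub hw))
  rw [stdNormalPDF_sub, hpivot] at h
  exact h.congr_deriv (by ring)

theorem pivot_sub_eq {κ w : ℝ} (hw : w ≠ 0) :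
    (κ - w ^ 2 / 2) / w = (κ + w ^ 2 / 2) / w - w := by
  field_simp
  ring

theorem pivot_mul_sub_eq {κ w : ℝ} (hw : w ≠ 0) :
    (κ + w ^ 2 / 2) / w * w - w ^ 2 / 2 = κ := by
  field_simp
  ring

theorem implied_cdf_correction (ω ω' : ℝ → ℝ)
    (hpos : ∀ κ, 0 < ω κ)
    (hderiv : ∀ κ, HasDerivAt ω (ω' κ) κ)
    (P : ℝ → ℝ)
    (hP : P = fun κ => Real.exp κ * stdNormalCDF ((κ + ω κ ^ 2 / 2) / ω κ)
      - stdNormalCDF ((κ - ω κ ^ 2 / 2) / ω κ)) :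
    ∀ κ, DifferentiableAt ℝ P κ ∧
      Real.exp (-κ) * deriv P κ
        = stdNormalCDF ((κ + ω κ ^ 2 / 2) / ω κ)
          + stdNormalPDF ((κ + ω κ ^ 2 / 2) / ω κ) * ω' κ := by
  intro κ
  set zPlus : ℝ → ℝ := fun x => (x + ω x ^ 2 / 2) / ω x
  have hzPlus : DifferentiableAt ℝ zPlus κ :=
    (differentiableAt_id.add ((hderiv κ).differentiableAt.pow 2 |>.div_const 2)).div
      (hderiv κ).differentiableAt (hpos κ).ne'
  have hP' : P = fun x => Real.exp x * stdNormalCDF (zPlus x) - stdNormalCDF (zPlus x - ω x) := by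
    rw [hP]
    funext x
    rw [pivot_sub_eq (hpos x).ne']
  have hPderiv := hP' ▸ hasDerivAt_exp_mul_stdNormalCDF_sub hzPlus.hasDerivAt (hderiv κ)
    (pivot_mul_sub_eq (hpos κ).ne')
  refine ⟨hPderiv.differentiableAt, ?_⟩
  rw [hPderiv.deriv, ← mul_assoc, ← Real.exp_add, neg_add_cancel, Real.exp_zero, one_mul]
end

section
/- (Additive logistic put pricing formula.) Let α > 0, β > 0, 0 < ς < β, and let μ ∈ ℝ satisfy exp(μ) = B(α, β)/B(α + ς, β − ς) (the martingale normalization). Let X be a real random variable with density ψ_LB(x) = (1/ς) φ_LB((x − μ)/ς; α, β). Then for every κ ∈ ℝ, with z(κ) = (κ − μ)/ς, the put price satisfies ∫ max(exp κ − exp x, 0) ψ_LB(x) dx = exp κ · Φ_LB(z(κ); α, β) − Φ_LB(z(κ); α + ς, β − ς). -/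
/-!
Substituting `u = Φ_L((x - μ) / ς)` turns `ψ_LB(x) dx` into the Beta density
`u^(α-1) (1-u)^(β-1) du / B(α, β)` on `(0, 1)` and `exp x` into `exp μ · (u / (1 - u))^ς`.
The payoff vanishes for `x ≥ κ`, so the put price is a combination of incomplete Beta integrals
up to `Φ_L(z(κ))`; the factor `(u / (1 - u))^ς` shifts the parameters to `(α + ς, β - ς)`, and
the martingale normalization makes the resulting constant `exp μ · B(α + ς, β - ς) / B(α, β)` one.
-/

open MeasureTheory Real Set

/-- PDF of the standard logistic distribution. -/
noncomputable def logisticPDF (z : ℝ) : ℝ := Real.exp z / (1 + Real.exp z) ^ 2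

/-- CDF of the standard logistic distribution. -/
noncomputable def logisticCDF (z : ℝ) : ℝ := Real.exp z / (1 + Real.exp z)

/-- The Beta function. -/
noncomputable def Beta (a b : ℝ) : ℝ := ∫ u in (0:ℝ)..1, u ^ (a - 1) * (1 - u) ^ (b - 1)

/-- PDF of the standard logistic-beta distribution. -/
noncomputable def logisticBetaPDF (z α β : ℝ) : ℝ :=
  logisticPDF z * logisticCDF z ^ (α - 1) * (1 - logisticCDF z) ^ (β - 1) / Beta α β

/-- CDF of the standard logistic-beta distribution. -/
noncomputable def logisticBetaCDF (z α β : ℝ) : ℝ :=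
  (1 / Beta α β) * ∫ u in (0:ℝ)..(logisticCDF z), u ^ (α - 1) * (1 - u) ^ (β - 1)

lemma logisticPDF_pos (z : ℝ) : 0 < logisticPDF z := by
  unfold logisticPDF; positivity

lemma logisticCDF_pos (z : ℝ) : 0 < logisticCDF z := by
  unfold logisticCDF; positivity

lemma logisticCDF_lt_one (z : ℝ) : logisticCDF z < 1 := by
  rw [logisticCDF, div_lt_one (by positivity)]
  linarith

lemma logisticCDF_strictMono : StrictMono logisticCDF := by
  intro a b hab
  rw [logisticCDF, logisticCDF, div_lt_div_iff₀ (by positivity) (by positivity)]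
  nlinarith [exp_lt_exp.2 hab]

lemma hasDerivAt_logisticCDF (z : ℝ) : HasDerivAt logisticCDF (logisticPDF z) z := by
  have h1 : 0 < 1 + exp z := by positivity
  have h : HasDerivAt (fun x => exp x / (1 + exp x)) _ z :=
    (hasDerivAt_exp z).div ((hasDerivAt_exp z).const_add 1) h1.ne'
  exact h.congr_deriv (by rw [logisticPDF]; ring)

lemma logisticCDF_div_one_sub (z : ℝ) : logisticCDF z / (1 - logisticCDF z) = exp z := by
  have : 0 < 1 + exp z := by positivity
  rw [logisticCDF]
  field_simp
  ring

lemma logisticCDF_log_div_one_sub {u : ℝ} (hu0 : 0 < u) (hu1 : u < 1) :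
    logisticCDF (log (u / (1 - u))) = u := by
  have : 0 < 1 - u := by linarith
  rw [logisticCDF, exp_log (by positivity)]
  field_simp
  ring

lemma image_logisticCDF_Iio (z : ℝ) : logisticCDF '' Iio z = Ioo 0 (logisticCDF z) := by
  ext u
  constructor
  · rintro ⟨x, hx, rfl⟩
    exact ⟨logisticCDF_pos x, logisticCDF_strictMono hx⟩
  · rintro ⟨hu0, hu⟩
    have hu1 := hu.trans (logisticCDF_lt_one z)
    refine ⟨log (u / (1 - u)), ?_, logisticCDF_log_div_one_sub hu0 hu1⟩
    rw [mem_Iio, ← logisticCDF_strictMono.lt_iff_lt, logisticCDF_log_div_one_sub hu0 hu1]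
    exact hu

lemma image_sub_div_Iio {ς : ℝ} (hς : 0 < ς) (μ κ : ℝ) :
    (fun x => (x - μ) / ς) '' Iio κ = Iio ((κ - μ) / ς) := by
  ext t
  simp only [mem_image, mem_Iio]
  constructor
  · rintro ⟨x, hx, rfl⟩
    exact div_lt_div_of_pos_right (by linarith) hς
  · intro ht
    rw [lt_div_iff₀ hς] at ht
    exact ⟨μ + ς * t, by linarith, by field_simp; ring⟩

lemma setIntegral_Ioo_logisticCDF_eq {ς : ℝ} (hς : 0 < ς) (μ κ : ℝ) (g : ℝ → ℝ) :
    ∫ u in Ioo 0 (logisticCDF ((κ - μ) / ς)), g u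
      = ∫ x in Iio κ, (1 / ς) * logisticPDF ((x - μ) / ς) * g (logisticCDF ((x - μ) / ς)) := by
  have hderiv (x : ℝ) : HasDerivAt (fun x => logisticCDF ((x - μ) / ς))
      ((1 / ς) * logisticPDF ((x - μ) / ς)) x := by
    have := (hasDerivAt_logisticCDF _).comp x (((hasDerivAt_id x).sub_const μ).div_const ς)
    simpa [mul_comm, Function.comp_def] using this
  have hmono : StrictMono fun x => logisticCDF ((x - μ) / ς) :=
    logisticCDF_strictMono.comp fun a b hab => div_lt_div_of_pos_right (by linarith) hς
  have himage : (fun x => logisticCDF ((x - μ) / ς)) '' Iio κ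
      = Ioo 0 (logisticCDF ((κ - μ) / ς)) := by
    rw [← image_logisticCDF_Iio, ← image_sub_div_Iio hς, image_image]
  rw [← himage, integral_image_eq_integral_abs_deriv_smul measurableSet_Iio
    (fun x _ => (hderiv x).hasDerivWithinAt) hmono.injective.injOn]
  refine setIntegral_congr_fun measurableSet_Iio fun x _ => ?_
  rw [smul_eq_mul, abs_of_pos (by have := logisticPDF_pos ((x - μ) / ς); positivity)]

lemma exp_eq_mul_logisticCDF_odds_rpow {ς : ℝ} (hς : ς ≠ 0) (μ x : ℝ) :
    exp x = exp μ * (logisticCDF ((x - μ) / ς) / (1 - logisticCDF ((x - μ) / ς))) ^ ς := by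
  rw [logisticCDF_div_one_sub, ← exp_mul, ← exp_add]
  congr 1
  field_simp
  ring

noncomputable def betaKernel (a b u : ℝ) : ℝ := u ^ (a - 1) * (1 - u) ^ (b - 1)

lemma odds_rpow_mul_betaKernel {u : ℝ} (hu0 : 0 < u) (hu1 : u < 1) (a b s : ℝ) :
    (u / (1 - u)) ^ s * betaKernel a b u = betaKernel (a + s) (b - s) u := by
  have h1u : 0 < 1 - u := by linarith
  have hu : u ^ (a + s - 1) = u ^ (a - 1) * u ^ s := by
    rw [← rpow_add hu0]; ring_nf
  have h1u' : (1 - u) ^ (b - 1) = (1 - u) ^ (b - s - 1) * (1 - u) ^ s := by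
    rw [← rpow_add h1u]; ring_nf
  have : (1 - u) ^ s ≠ 0 := (rpow_pos_of_pos h1u s).ne'
  rw [betaKernel, betaKernel, div_rpow hu0.le h1u.le, hu, h1u']
  field_simp

lemma integrableOn_betaKernel_Ioo {a c : ℝ} (ha : 0 < a) (hc : c < 1) (b : ℝ) :
    IntegrableOn (betaKernel a b) (Ioo 0 c) := by
  rcases le_or_gt c 0 with hc0 | hc0
  · simp [Ioo_eq_empty_of_le hc0]
  have hpow : IntegrableOn (fun u : ℝ => u ^ (a - 1)) (Icc 0 c) := by
    rw [integrableOn_Icc_iff_integrableOn_Ioc,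
      ← intervalIntegrable_iff_integrableOn_Ioc_of_le hc0.le]
    exact intervalIntegral.intervalIntegrable_rpow' (by linarith)
  have hcont : ContinuousOn (fun u : ℝ => (1 - u) ^ (b - 1)) (Icc 0 c) :=
    (continuousOn_const.sub continuousOn_id).rpow_const fun u hu =>
      Or.inl (sub_ne_zero.2 (by simp only [id]; linarith [hu.2]))
  exact (hpow.mul_continuousOn hcont isCompact_Icc).mono_set Ioo_subset_Icc_self

lemma logisticBetaCDF_eq_setIntegral (z a b : ℝ) :
    logisticBetaCDF z a b = (∫ u in Ioo 0 (logisticCDF z), betaKernel a b u) / Beta a b := by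
  rw [logisticBetaCDF, intervalIntegral.integral_of_le (logisticCDF_pos z).le,
    integral_Ioc_eq_integral_Ioo, one_div_mul_eq_div]
  rfl

lemma setIntegral_put_mul_betaKernel {a s c : ℝ} (ha : 0 < a) (has : 0 < a + s) (hc : c < 1)
    (b K M : ℝ) :
    ∫ u in Ioo 0 c, (K - M * (u / (1 - u)) ^ s) * betaKernel a b u
      = K * (∫ u in Ioo 0 c, betaKernel a b u)
        - M * ∫ u in Ioo 0 c, betaKernel (a + s) (b - s) u := by
  calc
    _ = ∫ u in Ioo 0 c, K * betaKernel a b u - M * betaKernel (a + s) (b - s) u := by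
      refine setIntegral_congr_fun measurableSet_Ioo fun u hu => ?_
      rw [← odds_rpow_mul_betaKernel hu.1 (hu.2.trans hc)]
      ring
    _ = _ := by
      rw [integral_sub ((integrableOn_betaKernel_Ioo ha hc b).const_mul K)
        ((integrableOn_betaKernel_Ioo has hc (b - s)).const_mul M),
        integral_const_mul, integral_const_mul]

lemma put_payoff_mul_logisticBetaPDF {ς : ℝ} (hς : ς ≠ 0) (μ κ a b x : ℝ) :
    max (exp κ - exp x) 0 * ((1 / ς) * logisticBetaPDF ((x - μ) / ς) a b)
      = (Iio κ).indicator (fun x => (1 / ς) * logisticPDF ((x - μ) / ς) *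
          ((exp κ - exp μ * (logisticCDF ((x - μ) / ς) / (1 - logisticCDF ((x - μ) / ς))) ^ ς)
            * betaKernel a b (logisticCDF ((x - μ) / ς)) / Beta a b)) x := by
  rcases lt_or_ge x κ with hx | hx
  · rw [indicator_of_mem (mem_Iio.2 hx), max_eq_left (sub_nonneg.2 (exp_le_exp.2 hx.le)),
      ← exp_eq_mul_logisticCDF_odds_rpow hς, logisticBetaPDF, betaKernel]
    ring
  · rw [indicator_of_notMem (notMem_Iio.2 hx), max_eq_right (sub_nonpos.2 (exp_le_exp.2 hx)),
      zero_mul]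

theorem additive_logistic_put_formula_general (α β ς μ : ℝ)
    (hα : 0 < α) (hς : 0 < ς)
    (hmart : Real.exp μ = Beta α β / Beta (α + ς) (β - ς)) (κ : ℝ) :
    ∫ x : ℝ, max (Real.exp κ - Real.exp x) 0 * ((1 / ς) * logisticBetaPDF ((x - μ) / ς) α β)
      = Real.exp κ * logisticBetaCDF ((κ - μ) / ς) α β
        - logisticBetaCDF ((κ - μ) / ς) (α + ς) (β - ς) := by
  obtain ⟨hB, hB'⟩ := div_ne_zero_iff.mp (hmart ▸ exp_ne_zero μ)
  have hF := logisticCDF_lt_one ((κ - μ) / ς)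
  simp_rw [put_payoff_mul_logisticBetaPDF hς.ne' μ κ α β]
  rw [integral_indicator measurableSet_Iio, ← setIntegral_Ioo_logisticCDF_eq hς μ κ
    fun u => (exp κ - exp μ * (u / (1 - u)) ^ ς) * betaKernel α β u / Beta α β,
    integral_div, setIntegral_put_mul_betaKernel hα (by linarith) hF,
    logisticBetaCDF_eq_setIntegral, logisticBetaCDF_eq_setIntegral, hmart]
  field_simp

theorem additive_logistic_put_formula (α β ς μ : ℝ)
    (hα : 0 < α) (hβ : 0 < β) (hς : 0 < ς) (hςβ : ς < β)
    (hmart : Real.exp μ = Beta α β / Beta (α + ς) (β - ς)) (κ : ℝ) :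
    ∫ x : ℝ, max (Real.exp κ - Real.exp x) 0 * ((1 / ς) * logisticBetaPDF ((x - μ) / ς) α β)
      = Real.exp κ * logisticBetaCDF ((κ - μ) / ς) α β
        - logisticBetaCDF ((κ - μ) / ς) (α + ς) (β - ς) :=
  additive_logistic_put_formula_general α β ς μ hα hς hmart κ
end
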